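/- For a prime p ≥ 5 with p ≡ 2 (mod 3) and any nonnegative integers k, n and integer j with p ∤ j, EO-bar(p^{2(k+1)} n + p^{2k+1} j + (p^{2(k+1)} - 1)/3) ≡ 0 (mod 2). In particular, EO-bar(25n + 5j + 8) ≡ 0 (mod 2) whenever 5 ∤ j. -/

import Mathlib

/-!
Modulo 2 the Frobenius gives `(q²;q²)² ≡ (q⁴;q⁴)` and `(q⁴;q⁴)² ≡ (q⁸;q⁸)`, so
`∑ EO-bar(n) qⁿ = (q⁴;q⁴)³ / (q²;q²)² ≡ (q⁸;q⁸)_∞`. By Euler's pentagonal number theorem the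
coefficient of `q^N` there is odd only if `N = 8·k(3k-1)/2`, and then `3N + 1 = (6k-1)²` is a
square. In the family, `3N + 1 = p^{2k+1}(3pn + 3j + p)` with `p ∤ 3pn + 3j + p`, which is not a
square since `p` divides it to an odd power.
-/

open PowerSeries

/-- `(q^a; q^c)_∞ = ∏_{i ≥ 0} (1 - q^{a + c·i})` as a formal power series in `q = X`
(for `a ≥ 1`, the `n`-th coefficient only depends on the first `n+1` factors). -/
noncomputable def qp (a c : ℕ) : PowerSeries ℚ :=
  PowerSeries.mk fun n =>
    PowerSeries.coeff (R := ℚ) n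
      (∏ i ∈ Finset.range (n + 1), (1 - (PowerSeries.X : PowerSeries ℚ) ^ (a + c * i)))

open Finset

noncomputable def qPochhammer (R : Type*) [CommRing R] (a c : ℕ) : R⟦X⟧ :=
  mk fun n => coeff n (∏ i ∈ range (n + 1), (1 - (X : R⟦X⟧) ^ (a + c * i)))

theorem qp_eq_qPochhammer (a c : ℕ) : qp a c = qPochhammer ℚ a c := rfl

section qPochhammer

variable {R S : Type*} [CommRing R] [CommRing S] {a c : ℕ}

theorem X_pow_dvd_prod_one_sub_X_pow_sub_one {ι : Type*} {s : Finset ι} {e : ι → ℕ} {K : ℕ}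
    (he : ∀ i ∈ s, K ≤ e i) : (X : R⟦X⟧) ^ K ∣ ∏ i ∈ s, (1 - X ^ e i) - 1 := by
  refine prod_induction _ (fun f => (X : R⟦X⟧) ^ K ∣ f - 1) (fun f g hf hg => ?_) (by simp)
    fun i hi => by simpa using (pow_dvd_pow X (he i hi)).neg_right
  rw [show f * g - 1 = (f - 1) * g + (g - 1) by ring]
  exact dvd_add (dvd_mul_of_dvd_left hf g) hg

theorem X_pow_dvd_qPochhammer_sub_prod (hc : 1 ≤ c) (M : ℕ) :
    (X : R⟦X⟧) ^ M ∣ qPochhammer R a c - ∏ i ∈ range M, (1 - X ^ (a + c * i)) := by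
  refine X_pow_dvd_iff.mpr fun n hn => ?_
  set P := ∏ i ∈ range (n + 1), (1 - (X : R⟦X⟧) ^ (a + c * i))
  have htail : (X : R⟦X⟧) ^ (n + 1) ∣ ∏ i ∈ Ico (n + 1) M, (1 - X ^ (a + c * i)) - 1 :=
    X_pow_dvd_prod_one_sub_X_pow_sub_one fun i hi => by
      have := (mem_Ico.mp hi).1
      nlinarith
  have := X_pow_dvd_iff.mp (dvd_mul_of_dvd_right htail P) n n.lt_succ_self
  rw [map_sub, sub_eq_zero, qPochhammer, coeff_mk, ← prod_range_mul_prod_Ico _ hn]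
  rw [mul_sub_one, map_sub, sub_eq_zero] at this
  exact this.symm

theorem coeff_qPochhammer (hc : 1 ≤ c) {n M : ℕ} (hn : n < M) :
    coeff n (qPochhammer R a c) = coeff n (∏ i ∈ range M, (1 - (X : R⟦X⟧) ^ (a + c * i))) := by
  have := X_pow_dvd_iff.mp (X_pow_dvd_qPochhammer_sub_prod (R := R) (a := a) hc M) n hn
  rwa [map_sub, sub_eq_zero] at this

theorem eq_qPochhammer_of_X_pow_dvd (hc : 1 ≤ c) {f : R⟦X⟧}
    (h : ∀ M, (X : R⟦X⟧) ^ M ∣ f - ∏ i ∈ range M, (1 - X ^ (a + c * i))) :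
    f = qPochhammer R a c := by
  ext n
  have := X_pow_dvd_iff.mp (h (n + 1)) n n.lt_succ_self
  rw [map_sub, sub_eq_zero] at this
  rw [this, coeff_qPochhammer hc n.lt_succ_self]

theorem constantCoeff_qPochhammer (ha : a ≠ 0) (c : ℕ) :
    constantCoeff (qPochhammer R a c) = 1 := by
  rw [← coeff_zero_eq_constantCoeff_apply, qPochhammer, coeff_mk]
  simp [ha]

theorem map_qPochhammer (f : R →+* S) (a c : ℕ) :
    map f (qPochhammer R a c) = qPochhammer S a c := by
  ext n
  simp only [coeff_map, qPochhammer, coeff_mk]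
  rw [← coeff_map]
  simp [map_prod]

theorem qPochhammer_pow_char (p : ℕ) [Fact p.Prime] [CharP R p] (hc : 1 ≤ c) :
    qPochhammer R a c ^ p = qPochhammer R (p * a) (p * c) := by
  have : CharP R⟦X⟧ p := charP_of_injective_algebraMap (C_injective (R := R)) p
  refine eq_qPochhammer_of_X_pow_dvd (one_le_mul (Fact.out : p.Prime).one_le hc) fun M => ?_
  have hprod : (∏ i ∈ range M, (1 - (X : R⟦X⟧) ^ (a + c * i))) ^ p
      = ∏ i ∈ range M, (1 - X ^ (p * a + p * c * i)) := by
    rw [← prod_pow]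
    refine prod_congr rfl fun i _ => ?_
    rw [sub_pow_char, one_pow, ← pow_mul, mul_comm, mul_add, mul_assoc]
  rw [← hprod]
  exact (X_pow_dvd_qPochhammer_sub_prod hc M).trans (sub_dvd_pow_sub_pow _ _ p)

theorem expand_qPochhammer (k : ℕ) (hk : k ≠ 0) (hc : 1 ≤ c) :
    expand k hk (qPochhammer R a c) = qPochhammer R (k * a) (k * c) := by
  refine eq_qPochhammer_of_X_pow_dvd (one_le_mul (Nat.one_le_iff_ne_zero.mpr hk) hc) fun M => ?_
  have hprod : expand k hk (∏ i ∈ range M, (1 - (X : R⟦X⟧) ^ (a + c * i)))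
      = ∏ i ∈ range M, (1 - X ^ (k * a + k * c * i)) := by
    simp only [map_prod, map_sub, map_one, map_pow, expand_X, ← pow_mul, mul_add, mul_assoc]
  have := map_dvd (expand k hk) (X_pow_dvd_qPochhammer_sub_prod (R := R) (a := a) hc M)
  rw [map_sub, hprod, map_pow, expand_X, ← pow_mul] at this
  exact (pow_dvd_pow X (Nat.le_mul_of_pos_left M (Nat.pos_of_ne_zero hk))).trans this

variable (R) in
theorem qPochhammer_one_one : qPochhammer R 1 1 = pentagonalSeries R := by
  ext n
  obtain ⟨M, hpent, hM⟩ := ((Filter.tendsto_finset_range.eventually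
    (coeff_prod_one_sub_X_pow_eventually_eq R n)).and (Filter.eventually_gt_atTop n)).exists
  rw [coeff_qPochhammer le_rfl hM, ← hpent]
  simp [add_comm]

end qPochhammer

theorem isSquare_twentyFour_mul_pentagonal_add_one (k : ℤ) : IsSquare (24 * pentagonal k + 1) := by
  refine ⟨(6 * k - 1).natAbs, Nat.cast_injective (R := ℤ) ?_⟩
  push_cast
  rw [abs_mul_abs_self]
  linear_combination 12 * two_mul_natCast_pentagonal k

theorem coeff_pentagonalSeries_eq_zero_of_not_isSquare (R : Type*) [CommRing R] {m : ℕ}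
    (hm : ¬ IsSquare (24 * m + 1)) : coeff m (pentagonalSeries R) = 0 :=
  coeff_pentagonalSeries_eq_zero R fun ⟨k, hk⟩ =>
    hm (hk ▸ isSquare_twentyFour_mul_pentagonal_add_one k)

theorem map_mk_natCast {R S : Type*} [CommRing R] [CommRing S] (f : R →+* S) (E : ℕ → ℕ) :
    map f (mk fun n => (E n : R)) = mk fun n => (E n : S) := by
  ext
  simp

theorem mk_natCast_zmod_two_eq_expand (E : ℕ → ℕ)
    (hE : mk (fun n => (E n : ℚ)) = qp 4 4 ^ 3 * (qp 2 2 ^ 2)⁻¹) :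
    mk (fun n => (E n : ZMod 2)) = expand 8 (by norm_num) (pentagonalSeries (ZMod 2)) := by
  have hQ : mk (fun n => (E n : ℚ)) * qPochhammer ℚ 2 2 ^ 2 = qPochhammer ℚ 4 4 ^ 3 := by
    rw [hE, qp_eq_qPochhammer, qp_eq_qPochhammer, mul_assoc, PowerSeries.inv_mul_cancel _
      (by simp [constantCoeff_qPochhammer]), mul_one]
  -- there is no ring map `ℚ → ZMod 2`, so the identity is first pulled back to `ℤ`
  have hZ : mk (fun n => (E n : ℤ)) * qPochhammer ℤ 2 2 ^ 2 = qPochhammer ℤ 4 4 ^ 3 := by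
    refine map_injective (Int.castRingHom ℚ) Int.cast_injective ?_
    rwa [map_mul, map_pow, map_pow, map_mk_natCast, map_qPochhammer, map_qPochhammer]
  have h2 : mk (fun n => (E n : ZMod 2)) * qPochhammer (ZMod 2) 2 2 ^ 2
      = qPochhammer (ZMod 2) 4 4 ^ 3 := by
    simpa only [map_mul, map_pow, map_mk_natCast, map_qPochhammer]
      using congrArg (map (Int.castRingHom (ZMod 2))) hZ
  have hsq22 : qPochhammer (ZMod 2) 2 2 ^ 2 = qPochhammer (ZMod 2) 4 4 :=
    qPochhammer_pow_char 2 (by norm_num)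
  have hsq44 : qPochhammer (ZMod 2) 4 4 ^ 2 = qPochhammer (ZMod 2) 8 8 :=
    qPochhammer_pow_char 2 (by norm_num)
  have hunit : IsUnit (qPochhammer (ZMod 2) 4 4) :=
    isUnit_iff_constantCoeff.mpr (by simp [constantCoeff_qPochhammer])
  rw [hsq22, pow_succ, hsq44, hunit.mul_left_inj] at h2
  rw [h2, ← qPochhammer_one_one, expand_qPochhammer 8 (by norm_num) le_rfl]

theorem two_dvd_of_not_isSquare (E : ℕ → ℕ)
    (hE : mk (fun n => (E n : ℚ)) = qp 4 4 ^ 3 * (qp 2 2 ^ 2)⁻¹) {N : ℕ}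
    (hN : ¬ IsSquare (3 * N + 1)) : 2 ∣ E N := by
  rw [← ZMod.natCast_eq_zero_iff, ← coeff_mk N fun n => (E n : ZMod 2),
    mk_natCast_zmod_two_eq_expand E hE, coeff_expand]
  split_ifs with h8
  · obtain ⟨m, rfl⟩ := h8
    rw [Nat.mul_div_cancel_left m (by norm_num)]
    exact coeff_pentagonalSeries_eq_zero_of_not_isSquare _ (by rwa [← mul_assoc] at hN)
  · rfl

theorem Nat.Prime.not_isSquare_pow_mul {p e u : ℕ} (hp : p.Prime) (he : Odd e) (hu : ¬ p ∣ u) :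
    ¬ IsSquare (p ^ e * u) := by
  rintro ⟨t, ht⟩
  have hu0 : u ≠ 0 := by rintro rfl; exact hu (dvd_zero p)
  have ht0 : t ≠ 0 := by rintro rfl; simp [hp.ne_zero, hu0] at ht
  have := congrArg (fun n => n.factorization p) ht
  simp only [Nat.factorization_mul (pow_ne_zero e hp.ne_zero) hu0, Nat.factorization_mul ht0 ht0,
    Finsupp.add_apply, hp.factorization_pow, Finsupp.single_eq_same,
    Nat.factorization_eq_zero_of_not_dvd hu, add_zero] at this
  exact Nat.not_even_iff_odd.mpr he ⟨_, this⟩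

theorem three_mul_add_one_eq_pow_mul {p : ℕ} (hp3 : p % 3 = 2) (k n j : ℕ) :
    3 * (p ^ (2 * (k + 1)) * n + p ^ (2 * k + 1) * j + (p ^ (2 * (k + 1)) - 1) / 3) + 1
      = p ^ (2 * k + 1) * (3 * p * n + 3 * j + p) := by
  obtain ⟨D, hD⟩ : ∃ D, p ^ (2 * (k + 1)) = 3 * D + 1 := ⟨p ^ (2 * (k + 1)) / 3, by
    have : p ^ (2 * (k + 1)) % 3 = 1 := by rw [Nat.pow_mod, hp3, pow_mul, Nat.pow_mod]; norm_num
    omega⟩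
  have hsucc : p ^ (2 * (k + 1)) = p ^ (2 * k + 1) * p := by ring
  rw [hD, show (3 * D + 1 - 1) / 3 = D by omega]
  nlinarith

theorem not_dvd_three_mul_add {p : ℕ} (hp : p.Prime) (hp3 : p % 3 = 2) (n : ℕ) {j : ℕ}
    (hj : ¬ p ∣ j) : ¬ p ∣ 3 * p * n + 3 * j + p := by
  intro h
  have h3j : p ∣ 3 * j := by
    rw [show 3 * p * n + 3 * j + p = 3 * j + p * (3 * n + 1) by ring] at h
    exact (Nat.dvd_add_left (dvd_mul_right p _)).mp h
  rcases (Nat.Prime.dvd_mul hp).mp h3j with h3 | h3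
  · have := (Nat.prime_dvd_prime_iff_eq hp Nat.prime_three).mp h3
    omega
  · exact hj h3

theorem two_dvd_of_prime_mod_three_eq_two (E : ℕ → ℕ)
    (hE : mk (fun n => (E n : ℚ)) = qp 4 4 ^ 3 * (qp 2 2 ^ 2)⁻¹) {p : ℕ} (hp : p.Prime)
    (hp3 : p % 3 = 2) (k n : ℕ) {j : ℕ} (hj : ¬ p ∣ j) :
    2 ∣ E (p ^ (2 * (k + 1)) * n + p ^ (2 * k + 1) * j + (p ^ (2 * (k + 1)) - 1) / 3) := by
  refine two_dvd_of_not_isSquare E hE ?_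
  rw [three_mul_add_one_eq_pow_mul hp3]
  exact hp.not_isSquare_pow_mul (odd_two_mul_add_one k) (not_dvd_three_mul_add hp hp3 n hj)

/-- For a prime `p ≥ 5` with `p ≡ 2 (mod 3)`, `k, n ≥ 0` and `p ∤ j`:
`EObar(p^{2(k+1)} n + p^{2k+1} j + (p^{2(k+1)}-1)/3) ≡ 0 (mod 2)`; in particular
`EObar(25n + 5j + 8) ≡ 0 (mod 2)` whenever `5 ∤ j`. -/
theorem EObar_prime_power_family_mod_two :
    (∀ (p : ℕ), p.Prime → 5 ≤ p → p % 3 = 2 →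
      ∀ (EObar : ℕ → ℕ),
        PowerSeries.mk (fun n => (EObar n : ℚ)) = qp 4 4 ^ 3 * (qp 2 2 ^ 2)⁻¹ →
        ∀ (k n j : ℕ), ¬ p ∣ j →
          2 ∣ EObar (p ^ (2 * (k + 1)) * n + p ^ (2 * k + 1) * j +
            (p ^ (2 * (k + 1)) - 1) / 3)) ∧
    (∀ (EObar : ℕ → ℕ),
      PowerSeries.mk (fun n => (EObar n : ℚ)) = qp 4 4 ^ 3 * (qp 2 2 ^ 2)⁻¹ →
      ∀ (n j : ℕ), ¬ 5 ∣ j → 2 ∣ EObar (25 * n + 5 * j + 8)) := by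
  refine ⟨fun p hp _ hp3 EObar hE k n j hj =>
    two_dvd_of_prime_mod_three_eq_two EObar hE hp hp3 k n hj, fun EObar hE n j hj => ?_⟩
  simpa using two_dvd_of_prime_mod_three_eq_two EObar hE Nat.prime_five rfl 0 n hj
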